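/- arXiv:1802.07188 — 2 statements merged into one kernel-verified Lean document; each statement's English description precedes it below -/
import Mathlib

section
/- Differentiating with respect to ρ the one-sided velocity matching condition v⁺(t_eve(ρ),ρ) = h(t_eve(ρ), q(t_eve(ρ),ρ), v⁻(t_eve(ρ),ρ), ρ) yields the jump formula for velocity sensitivities: V⁺ = h_q·Q⁻ + h_v·V⁻ + (h_q·v⁻ − a⁺ + h_v·a⁻ + h_t)·(dt_eve/dρ) + h_ρ, where a± denote the one-sided accelerations and Q⁻, V± the one-sided sensitivities of position and velocity at fixed time. -/
/-!
Both sides of the matching condition are functions of `ρ` through the graph `ρ ↦ (t_eve ρ, ρ)`.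
By the chain rule the derivative of `g (t_eve ρ, ρ)` is `∂ₜg · dt_eve + ∂_ρ g`, so
differentiating the condition and expanding the derivative of `h` by linearity in its four
arguments gives the formula; the `C²` hypotheses on `q±` are what make `v±` differentiable.
-/

open ContinuousLinearMap

section PartialDerivatives

variable {𝕜 E F : Type*} [NontriviallyNormedField 𝕜] [NormedAddCommGroup E] [NormedSpace 𝕜 E]
  [NormedAddCommGroup F] [NormedSpace 𝕜 F]

theorem deriv_slice_fst_eq_fderiv {g : 𝕜 × E → F} {t : 𝕜} {x : E}
    (hg : DifferentiableAt 𝕜 g (t, x)) :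
    deriv (fun s => g (s, x)) t = fderiv 𝕜 g (t, x) (1, 0) :=
  (hg.hasFDerivAt.comp_hasDerivAt t ((hasDerivAt_id t).prodMk (hasDerivAt_const t x))).deriv

theorem fderiv_slice_snd_eq_comp_inr {g : 𝕜 × E → F} {t : 𝕜} {x : E}
    (hg : DifferentiableAt 𝕜 g (t, x)) :
    fderiv 𝕜 (fun y => g (t, y)) x = (fderiv 𝕜 g (t, x)).comp (inr 𝕜 𝕜 E) :=
  (hg.hasFDerivAt.comp x (hasFDerivAt_prodMk_right t x)).fderiv

theorem ContDiff.deriv_slice_fst {g : 𝕜 × E → F} {m n : WithTop ℕ∞} (hg : ContDiff 𝕜 n g)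
    (hmn : m + 1 ≤ n) : ContDiff 𝕜 m (fun x : 𝕜 × E => deriv (fun s => g (s, x.2)) x.1) := by
  have hg' : Differentiable 𝕜 g :=
    hg.differentiable (zero_lt_one.trans_le (le_add_self.trans hmn)).ne'
  simp_rw [deriv_slice_fst_eq_fderiv (hg' _)]
  exact (hg.fderiv_right hmn).clm_apply contDiff_const

theorem DifferentiableAt.hasFDerivAt_comp_graph {g : 𝕜 × E → F} {τ : E → 𝕜} {τ' : E →L[𝕜] 𝕜}
    {x : E}
    (hg : DifferentiableAt 𝕜 g (τ x, x)) (hτ : HasFDerivAt τ τ' x) :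
    HasFDerivAt (fun y => g (τ y, y))
      (τ'.smulRight (deriv (fun s => g (s, x)) (τ x)) + fderiv 𝕜 (fun y => g (τ x, y)) x) x := by
  refine (hg.hasFDerivAt.comp (f := fun y => (τ y, y)) x
    (hτ.prodMk (hasFDerivAt_id x))).congr_fderiv ?_
  ext d
  have hsplit : (τ' d, d) = τ' d • ((1 : 𝕜), (0 : E)) + (0, d) := by ext <;> simp
  rw [deriv_slice_fst_eq_fderiv hg, fderiv_slice_snd_eq_comp_inr hg]
  simp only [add_apply, smulRight_apply, coe_comp, Function.comp_apply, inr_apply, prod_apply,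
    coe_id', id_eq]
  rw [hsplit, map_add, map_smul]

end PartialDerivatives

theorem ContinuousLinearMap.map_smul_add_prod {R E F G H : Type*} [Semiring R]
    [TopologicalSpace R] [AddCommMonoid E] [Module R E] [TopologicalSpace E] [AddCommMonoid F]
    [Module R F] [TopologicalSpace F] [AddCommMonoid G] [Module R G] [TopologicalSpace G]
    [AddCommMonoid H] [Module R H] [TopologicalSpace H]
    (L : R × E × F × G →L[R] H) (c : R) (v q : E) (a w : F) (d : G) :
    L (c, c • v + q, c • a + w, d) = L (0, q, 0, 0) + L (0, 0, w, 0)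
      + c • (L (0, v, 0, 0) + L (0, 0, a, 0) + L (1, 0, 0, 0)) + L (0, 0, 0, d) := by
  have hsplit : (c, c • v + q, c • a + w, d) = ((0 : R), q, (0 : F), (0 : G)) + (0, 0, w, 0)
      + c • ((0, v, 0, 0) + (0, 0, a, 0) + (1, 0, 0, 0)) + (0, 0, 0, d) := by
    ext <;> simp [add_comm]
  rw [hsplit]
  simp only [map_add, map_smul]

theorem velocity_sensitivity_jump_general {n p : ℕ}
    (qm qp : ℝ × (Fin p → ℝ) → (Fin n → ℝ))
    (teve : (Fin p → ℝ) → ℝ)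
    (h : ℝ × (Fin n → ℝ) × (Fin n → ℝ) × (Fin p → ℝ) → (Fin n → ℝ))
    (ρ₀ : Fin p → ℝ)
    (hqm : ContDiff ℝ 2 qm) (hqp : ContDiff ℝ 2 qp)
    (hh : ContDiff ℝ 1 h)
    (hteve : DifferentiableAt ℝ teve ρ₀)
    (vm vp : ℝ × (Fin p → ℝ) → (Fin n → ℝ))
    (hvm : vm = fun x => deriv (fun s => qm (s, x.2)) x.1)
    (hvp : vp = fun x => deriv (fun s => qp (s, x.2)) x.1)
    (hjump : ∀ ρ, vp (teve ρ, ρ) = h (teve ρ, qm (teve ρ, ρ), vm (teve ρ, ρ), ρ)) :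
    ∀ dρ : Fin p → ℝ,
      fderiv ℝ (fun ρ => vp (teve ρ₀, ρ)) ρ₀ dρ =
        -- h_q · Q⁻
        (fderiv ℝ h (teve ρ₀, qm (teve ρ₀, ρ₀), vm (teve ρ₀, ρ₀), ρ₀))
          (0, fderiv ℝ (fun ρ => qm (teve ρ₀, ρ)) ρ₀ dρ, 0, 0)
        -- h_v · V⁻
        + (fderiv ℝ h (teve ρ₀, qm (teve ρ₀, ρ₀), vm (teve ρ₀, ρ₀), ρ₀))
            (0, 0, fderiv ℝ (fun ρ => vm (teve ρ₀, ρ)) ρ₀ dρ, 0)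
        -- (h_q·v⁻ − a⁺ + h_v·a⁻ + h_t)·(dt_eve/dρ)
        + (fderiv ℝ teve ρ₀ dρ) •
            ((fderiv ℝ h (teve ρ₀, qm (teve ρ₀, ρ₀), vm (teve ρ₀, ρ₀), ρ₀))
                (0, vm (teve ρ₀, ρ₀), 0, 0)
              - deriv (fun s => vp (s, ρ₀)) (teve ρ₀)
              + (fderiv ℝ h (teve ρ₀, qm (teve ρ₀, ρ₀), vm (teve ρ₀, ρ₀), ρ₀))
                  (0, 0, deriv (fun s => vm (s, ρ₀)) (teve ρ₀), 0)
              + (fderiv ℝ h (teve ρ₀, qm (teve ρ₀, ρ₀), vm (teve ρ₀, ρ₀), ρ₀))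
                  (1, 0, 0, 0))
        -- h_ρ
        + (fderiv ℝ h (teve ρ₀, qm (teve ρ₀, ρ₀), vm (teve ρ₀, ρ₀), ρ₀))
            (0, 0, 0, dρ) := by
  intro dρ
  have hvm' : Differentiable ℝ vm :=
    hvm ▸ (hqm.deriv_slice_fst (m := 1) le_rfl).differentiable one_ne_zero
  have hvp' : Differentiable ℝ vp :=
    hvp ▸ (hqp.deriv_slice_fst (m := 1) le_rfl).differentiable one_ne_zero
  have hvm_eq : deriv (fun s => qm (s, ρ₀)) (teve ρ₀) = vm (teve ρ₀, ρ₀) := by rw [hvm]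
  have hτ := hteve.hasFDerivAt
  have hlhs := (hvp' _).hasFDerivAt_comp_graph hτ
  have hrhs := (hh.differentiable one_ne_zero _).hasFDerivAt.comp ρ₀
    (hτ.prodMk (((hqm.differentiable two_ne_zero _).hasFDerivAt_comp_graph hτ).prodMk
      (((hvm' _).hasFDerivAt_comp_graph hτ).prodMk (hasFDerivAt_id ρ₀))))
  have hderiv_jump := congrArg (· dρ) ((funext hjump ▸ hlhs).unique hrhs)
  simp only [hvm_eq, add_apply, smulRight_apply, coe_comp, Function.comp_apply, prod_apply,
    id_apply, id_eq, map_smul_add_prod] at hderiv_jump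
  linear_combination (norm := module) hderiv_jump

/-- Jump formula for velocity sensitivities: differentiating the one-sided velocity
matching condition `v⁺(t_eve(ρ),ρ) = h(t_eve(ρ), q(t_eve(ρ),ρ), v⁻(t_eve(ρ),ρ), ρ)`
with respect to `ρ` yields
`V⁺ = h_q·Q⁻ + h_v·V⁻ + (h_q·v⁻ − a⁺ + h_v·a⁻ + h_t)·(dt_eve/dρ) + h_ρ`. -/
theorem velocity_sensitivity_jump {n p : ℕ}
    (qm qp : ℝ × (Fin p → ℝ) → (Fin n → ℝ))
    (teve : (Fin p → ℝ) → ℝ)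
    (h : ℝ × (Fin n → ℝ) × (Fin n → ℝ) × (Fin p → ℝ) → (Fin n → ℝ))
    (ρ₀ : Fin p → ℝ)
    (hqm : ContDiff ℝ 2 qm) (hqp : ContDiff ℝ 2 qp)
    (hh : ContDiff ℝ 1 h)
    (hteve : DifferentiableAt ℝ teve ρ₀)
    (hmatch : ∀ ρ, qp (teve ρ, ρ) = qm (teve ρ, ρ))
    (vm vp : ℝ × (Fin p → ℝ) → (Fin n → ℝ))
    (hvm : vm = fun x => deriv (fun s => qm (s, x.2)) x.1)
    (hvp : vp = fun x => deriv (fun s => qp (s, x.2)) x.1)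
    (hjump : ∀ ρ, vp (teve ρ, ρ) = h (teve ρ, qm (teve ρ, ρ), vm (teve ρ, ρ), ρ)) :
    ∀ dρ : Fin p → ℝ,
      fderiv ℝ (fun ρ => vp (teve ρ₀, ρ)) ρ₀ dρ =
        -- h_q · Q⁻
        (fderiv ℝ h (teve ρ₀, qm (teve ρ₀, ρ₀), vm (teve ρ₀, ρ₀), ρ₀))
          (0, fderiv ℝ (fun ρ => qm (teve ρ₀, ρ)) ρ₀ dρ, 0, 0)
        -- h_v · V⁻
        + (fderiv ℝ h (teve ρ₀, qm (teve ρ₀, ρ₀), vm (teve ρ₀, ρ₀), ρ₀))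
            (0, 0, fderiv ℝ (fun ρ => vm (teve ρ₀, ρ)) ρ₀ dρ, 0)
        -- (h_q·v⁻ − a⁺ + h_v·a⁻ + h_t)·(dt_eve/dρ)
        + (fderiv ℝ teve ρ₀ dρ) •
            ((fderiv ℝ h (teve ρ₀, qm (teve ρ₀, ρ₀), vm (teve ρ₀, ρ₀), ρ₀))
                (0, vm (teve ρ₀, ρ₀), 0, 0)
              - deriv (fun s => vp (s, ρ₀)) (teve ρ₀)
              + (fderiv ℝ h (teve ρ₀, qm (teve ρ₀, ρ₀), vm (teve ρ₀, ρ₀), ρ₀))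
                  (0, 0, deriv (fun s => vm (s, ρ₀)) (teve ρ₀), 0)
              + (fderiv ℝ h (teve ρ₀, qm (teve ρ₀, ρ₀), vm (teve ρ₀, ρ₀), ρ₀))
                  (1, 0, 0, 0))
        -- h_ρ
        + (fderiv ℝ h (teve ρ₀, qm (teve ρ₀, ρ₀), vm (teve ρ₀, ρ₀), ρ₀))
            (0, 0, 0, dρ) :=
  velocity_sensitivity_jump_general qm qp teve h ρ₀ hqm hqp hh hteve vm vp hvm hvp hjump
end

section
/- The adjoint variables λ = (λ^Q, λ^V, λ^Γ) of the index-1 DAE 'λ formulation' and the constraint multipliers μ = (μ^Q, μ^V, μ^Γ) of the 'μ formulation' are related by λ = Kᵀ·μ where K = [[I,0,0],[0,M,Φ_qᵀ],[0,Φ_q,0]]; consequently, if M is symmetric positive definite and Φ_q has full row rank, the correspondence μ ↦ λ is a linear bijection. -/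
open Matrix

section

variable {m n p 𝕜 : Type*} [Fintype m] [Fintype n]

/-- On the kernel, `B u = 0` kills the cross term `uᴴ Bᴴ v = (B u)ᴴ v`, so the first block row
leaves `uᴴ A u = 0`. -/
theorem Matrix.PosDef.isUnit_fromBlocks_conjTranspose_zero [DecidableEq m] [DecidableEq n]
    [Field 𝕜] [PartialOrder 𝕜] [StarRing 𝕜] {A : Matrix n n 𝕜} (hA : A.PosDef)
    {B : Matrix m n 𝕜} (hB : Function.Injective Bᴴ.mulVec) :
    IsUnit (fromBlocks A Bᴴ B 0) := by
  rw [← mulVec_injective_iff_isUnit, ← coe_mulVecLin, ← LinearMap.ker_eq_bot,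
    LinearMap.ker_eq_bot']
  intro x hx
  rw [coe_mulVecLin, fromBlocks_mulVec, zero_mulVec, add_zero, ← Sum.elim_zero_zero,
    Sum.elim_eq_iff] at hx
  obtain ⟨hrow₁, hrow₂⟩ := hx
  set u := x ∘ Sum.inl
  set v := x ∘ Sum.inr
  have hquad : star u ⬝ᵥ (A *ᵥ u) = 0 := by
    have hcross : star u ⬝ᵥ (Bᴴ *ᵥ v) = 0 := by
      rw [dotProduct_mulVec, ← star_mulVec, hrow₂, star_zero, zero_dotProduct]
    calc star u ⬝ᵥ (A *ᵥ u) = star u ⬝ᵥ (A *ᵥ u + Bᴴ *ᵥ v) := by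
          rw [dotProduct_add, hcross, add_zero]
      _ = 0 := by rw [hrow₁, dotProduct_zero]
  have hu : u = 0 := by
    by_contra hu
    exact (hA.dotProduct_mulVec_pos hu).ne' hquad
  have hv : v = 0 := hB (by rwa [hu, mulVec_zero, zero_add, ← mulVec_zero Bᴴ] at hrow₁)
  rw [← Sum.elim_comp_inl_inr x, ← Sum.elim_zero_zero]
  exact congrArg₂ Sum.elim hu hv

theorem Matrix.mulVec_transpose_injective_of_rank_eq_card [Field 𝕜] (A : Matrix m n 𝕜)
    (hA : A.rank = Fintype.card m) : Function.Injective Aᵀ.mulVec := by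
  rw [mulVec_injective_iff, col_transpose, linearIndependent_iff_card_eq_finrank_span,
    Set.finrank, ← rank_eq_finrank_span_row, hA]

theorem Matrix.bijective_mul_left_of_isUnit [DecidableEq m] [Semiring 𝕜]
    {A : Matrix m m 𝕜} (hA : IsUnit A) : Function.Bijective fun B : Matrix m p 𝕜 => A * B := by
  obtain ⟨u, rfl⟩ := hA
  refine Function.bijective_iff_has_inverse.mpr
    ⟨fun B => (↑u⁻¹ : Matrix m m 𝕜) * B, fun B => ?_, fun B => ?_⟩
  · simp only [← Matrix.mul_assoc, Units.inv_mul, Matrix.one_mul]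
  · simp only [← Matrix.mul_assoc, Units.mul_inv, Matrix.one_mul]

end

/-- The adjoint variables of the 'λ formulation' and the multipliers of the
'μ formulation' are related by `λ = Kᵀ·μ` with
`K = [[I,0,0],[0,M,Φ_qᵀ],[0,Φ_q,0]]`; for `M` symmetric positive definite and
`Φ_q` of full row rank, `K` is invertible, so `μ ↦ Kᵀ·μ` is a linear bijection. -/
theorem adjoint_mu_lambda_bijection {n m c : ℕ}
    (M : Matrix (Fin n) (Fin n) ℝ) (hM : M.PosDef)
    (Φq : Matrix (Fin m) (Fin n) ℝ) (hΦ : Φq.rank = m)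
    (K : Matrix (Fin n ⊕ (Fin n ⊕ Fin m)) (Fin n ⊕ (Fin n ⊕ Fin m)) ℝ)
    (hK : K = Matrix.fromBlocks (1 : Matrix (Fin n) (Fin n) ℝ) 0 0
        (Matrix.fromBlocks M Φqᵀ Φq (0 : Matrix (Fin m) (Fin m) ℝ))) :
    IsUnit K ∧
      Function.Bijective
        (fun μ : Matrix (Fin n ⊕ (Fin n ⊕ Fin m)) (Fin c) ℝ => Kᵀ * μ) := by
  have hΦinj : Function.Injective Φqᴴ.mulVec := by
    rw [conjTranspose_eq_transpose_of_trivial]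
    exact Φq.mulVec_transpose_injective_of_rank_eq_card (by rw [hΦ, Fintype.card_fin])
  have hKunit : IsUnit K := by
    rw [hK, isUnit_fromBlocks_zero₂₁, ← conjTranspose_eq_transpose_of_trivial]
    exact ⟨isUnit_one, hM.isUnit_fromBlocks_conjTranspose_zero hΦinj⟩
  exact ⟨hKunit, bijective_mul_left_of_isUnit ((isUnit_transpose K).mpr hKunit)⟩
end
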